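/- arXiv:1606.06056 — 3 statements merged into one kernel-verified Lean document; each statement's English description precedes it below -/
import Mathlib

section
/- Let α be a random variable uniformly distributed on [0, 2π] and fix ε ∈ (0, 1/2). Then the chance-constrained set {u ∈ ℝ² : P{ cos(α)·u₁ + sin(α)·u₂ ≤ 1 } ≥ 1 − ε} equals the closed Euclidean ball {u ∈ ℝ² : ‖u‖ ≤ 1/cos(επ)} centered at the origin of radius 1/cos(επ). -/
/-!
Write `(u₀, u₁) = ‖u‖ (cos θ, sin θ)`, so that the constraint reads `‖u‖ cos (α - θ) ≤ 1`.
Since `α ↦ cos (α - θ)` is `2π`-periodic and Lebesgue measure is translation invariant, the angle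
`θ` is irrelevant. For `u ≠ 0` the constraint fails exactly on the arc `|α - θ| < arccos (1/‖u‖)`,
so it holds with probability `1 - arccos (1/‖u‖) / π`; this is at least `1 - ε` iff
`arccos (1/‖u‖) ≤ επ`, i.e. iff `cos (επ) ≤ 1/‖u‖`.
-/

open MeasureTheory Real
open Set Function

theorem Function.Periodic.volume_preimage_inter_Ioc_add_eq {X : Type*} {f : ℝ → X} {T : ℝ}
    (hf : Periodic f T) (hT : 0 < T) {B : Set X} (hB : MeasurableSet (f ⁻¹' B)) (t s : ℝ) :
    volume (f ⁻¹' B ∩ Ioc t (t + T)) = volume (f ⁻¹' B ∩ Ioc s (s + T)) := by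
  have : VAddInvariantMeasure (AddSubgroup.zmultiples T) ℝ volume :=
    ⟨fun g A _ ↦ measure_preimage_add _ _ _⟩
  refine (isAddFundamentalDomain_Ioc hT t).measure_set_eq (isAddFundamentalDomain_Ioc hT s) hB
    fun g ↦ ?_
  ext x
  simp only [mem_preimage, hf.map_vadd_zmultiples g x]

theorem Real.cos_le_iff_arccos_le {x c : ℝ} (hc : -1 ≤ c) (hx₀ : 0 ≤ x) (hxπ : x ≤ π) :
    cos x ≤ c ↔ arccos c ≤ x := by
  rcases le_or_gt c 1 with hc₁ | hc₁
  · conv_lhs => rw [← cos_arccos hc hc₁]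
    exact strictAntiOn_cos.le_iff_ge ⟨hx₀, hxπ⟩ ⟨arccos_nonneg c, arccos_le_pi c⟩
  · rw [arccos_eq_zero.2 hc₁.le]
    exact iff_of_true ((cos_le_one x).trans hc₁.le) hx₀

theorem Real.volume_setOf_cos_le_inter_Ioc {c : ℝ} (hc : -1 ≤ c) :
    volume ({x | cos x ≤ c} ∩ Ioc (-π) π) = ENNReal.ofReal (2 * (π - arccos c)) := by
  set a := arccos c
  have hset : {x | cos x ≤ c} ∩ Ioc (-π) π = Ioc (-π) π \ Ioo (-a) a := by
    ext x
    rw [mem_inter_iff, mem_sdiff, and_comm]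
    refine and_congr_right fun hx ↦ ?_
    rw [mem_ofPred_eq, mem_Ioo, ← abs_lt, not_lt, ← cos_abs]
    exact cos_le_iff_arccos_le hc (abs_nonneg x) (abs_le.2 ⟨hx.1.le, hx.2⟩)
  have ha : a ≤ π := arccos_le_pi c
  rw [hset, measure_sdiff (Ioo_subset_Ioc_self.trans (Ioc_subset_Ioc (by linarith) ha))
      measurableSet_Ioo.nullMeasurableSet measure_Ioo_lt_top.ne,
    volume_Ioc, volume_Ioo, ← ENNReal.ofReal_sub _ (by linarith [arccos_nonneg c])]
  ring_nf

theorem Real.volume_setOf_cos_sub_le_inter_Ioc (θ : ℝ) {c : ℝ} (hc : -1 ≤ c) :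
    volume ({x | cos (x - θ) ≤ c} ∩ Ioc 0 (2 * π)) = ENNReal.ofReal (2 * (π - arccos c)) := by
  have hper : Periodic (fun x ↦ cos (x - θ)) (2 * π) := fun x ↦ by
    simp only [add_sub_right_comm, cos_add_two_pi]
  have hmeas : MeasurableSet ((fun x ↦ cos (x - θ)) ⁻¹' Iic c) :=
    measurableSet_Iic.preimage (by fun_prop)
  calc volume ({x | cos (x - θ) ≤ c} ∩ Ioc 0 (2 * π))
      = volume ({x | cos (x - θ) ≤ c} ∩ Ioc (θ - π) (θ - π + 2 * π)) := by
        simpa only [zero_add, preimage, mem_Iic] using hper.volume_preimage_inter_Ioc_add_eq two_pi_pos hmeas 0 (θ - π)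
    _ = volume ((· + -θ) ⁻¹' ({x | cos x ≤ c} ∩ Ioc (-π) π)) := by
        congr 1
        ext x
        simp only [mem_inter_iff, mem_ofPred_eq, mem_Ioc, mem_preimage, ← sub_eq_add_neg]
        constructor <;> rintro ⟨h, h₁, h₂⟩ <;> exact ⟨h, by linarith, by linarith⟩
    _ = ENNReal.ofReal (2 * (π - arccos c)) := by
        rw [measure_preimage_add_right, volume_setOf_cos_le_inter_Ioc hc]

noncomputable def uniformAngle : Measure ℝ :=
  (ENNReal.ofReal (2 * π))⁻¹ • volume.restrict (Icc 0 (2 * π))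

instance : IsProbabilityMeasure uniformAngle := by
  constructor
  rw [uniformAngle, Measure.smul_apply, Measure.restrict_apply_univ, volume_Icc, sub_zero,
    smul_eq_mul, ENNReal.inv_mul_cancel (by simp [pi_pos]) ENNReal.ofReal_ne_top]

theorem uniformAngle_setOf_cos_sub_le (θ : ℝ) {c : ℝ} (hc : -1 ≤ c) :
    uniformAngle {x | cos (x - θ) ≤ c} = ENNReal.ofReal (1 - arccos c / π) := by
  have hmeas : MeasurableSet {x | cos (x - θ) ≤ c} := measurableSet_le (by fun_prop) (by fun_prop)
  rw [uniformAngle, Measure.smul_apply, ← Measure.restrict_congr_set Ioc_ae_eq_Icc,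
    Measure.restrict_apply hmeas, volume_setOf_cos_sub_le_inter_Ioc θ hc, smul_eq_mul,
    ← ENNReal.div_eq_inv_mul, ← ENNReal.ofReal_div_of_pos two_pi_pos]
  congr 1
  field_simp

theorem EuclideanSpace.exists_cos_mul_add_sin_mul_eq (u : EuclideanSpace ℝ (Fin 2)) :
    ∃ θ, ∀ x, cos x * u 0 + sin x * u 1 = ‖u‖ * cos (x - θ) := by
  set z := Complex.orthonormalBasisOneI.repr.symm u
  have hnorm : ‖z‖ = ‖u‖ := LinearIsometryEquiv.norm_map _ u
  have hre : z.re = u 0 := by simp [z]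
  have him : z.im = u 1 := by simp [z]
  refine ⟨z.arg, fun x ↦ ?_⟩
  rw [cos_sub, ← hnorm, ← hre, ← him, ← Complex.norm_mul_cos_arg z, ← Complex.norm_mul_sin_arg z]
  ring

/-- for `α` uniform on `[0, 2π]` and `ε ∈ (0, 1/2)`, the chance-constrained
set `{u ∈ ℝ² : P{cos(α)u₁ + sin(α)u₂ ≤ 1} ≥ 1 − ε}` is the closed ball of radius
`1/cos(επ)` centered at the origin. -/
theorem chance_constraint_uniform_angle_eq_ball
    (ε : ℝ) (hε : ε ∈ Set.Ioo (0 : ℝ) (1 / 2)) :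
    {u : EuclideanSpace ℝ (Fin 2) |
        ((ENNReal.ofReal (2 * π))⁻¹ • volume.restrict (Set.Icc (0 : ℝ) (2 * π)))
            {α : ℝ | Real.cos α * u 0 + Real.sin α * u 1 ≤ 1} ≥
          ENNReal.ofReal (1 - ε)} =
      Metric.closedBall (0 : EuclideanSpace ℝ (Fin 2)) (1 / Real.cos (ε * π)) := by
  obtain ⟨hε₀, hε₁⟩ := hε
  have hεπ : 0 < ε * π := mul_pos hε₀ pi_pos
  have hcos : 0 < cos (ε * π) := cos_pos_of_mem_Ioo ⟨by linarith [pi_pos], by nlinarith [pi_pos]⟩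
  change {u | uniformAngle _ ≥ _} = _
  ext u
  obtain ⟨θ, hθ⟩ := EuclideanSpace.exists_cos_mul_add_sin_mul_eq u
  simp only [mem_ofPred_eq, hθ, Metric.mem_closedBall, dist_zero_right, ge_iff_le]
  rcases (norm_nonneg u).eq_or_lt with hu | hu
  · simp only [← hu, zero_mul, zero_le_one, ofPred_true, measure_univ]
    exact iff_of_true (ENNReal.ofReal_le_one.2 (by linarith)) (by positivity)
  · have hset : {x | ‖u‖ * cos (x - θ) ≤ 1} = {x | cos (x - θ) ≤ 1 / ‖u‖} := by
      ext x
      rw [mem_ofPred_eq, mem_ofPred_eq, le_div_iff₀ hu, mul_comm]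
    have hc : -1 ≤ 1 / ‖u‖ := by linarith [one_div_pos.2 hu]
    rw [hset, uniformAngle_setOf_cos_sub_le θ hc, ENNReal.ofReal_le_ofReal_iff',
      or_iff_left (by linarith), sub_le_sub_iff_left, div_le_iff₀ pi_pos,
      ← cos_le_iff_arccos_le hc hεπ.le (by nlinarith [pi_pos]), le_one_div hu hcos]
end

section
/- Consider matrices A^j ∈ ℝ^{n×n}, B^j ∈ ℝ^{n×m} for j = 1,…,N_c, a feedback gain K ∈ ℝ^{m×n}, a horizon T ≥ 1, a set D ⊆ ℝ^n × ℝ^{Tm}, a matrix H∞ and vector h∞, and define C∞ = {x ∈ ℝ^n : H∞ x ≤ h∞ (componentwise)} and the first-step constraint set D_R = {(x, v) ∈ ℝ^n × ℝ^{Tm} : H∞((A^j + B^j K)x + B^j v₀) ≤ h∞ for all j = 1,…,N_c}, where v₀ ∈ ℝ^m denotes the first block of v. Assume C∞ ⊆ {x ∈ ℝ^n : there exists v ∈ ℝ^{Tm} with (x, v) ∈ D ∩ D_R}. Then for every (x_k, v_k) ∈ D ∩ D_R, every (A, B) in the convex hull of {(A^j, B^j) : j = 1,…,N_c}, and x_{k+1}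 = (A + BK)x_k + B·(v_k)₀, the set V(x_{k+1}) = {v ∈ ℝ^{Tm} : (x_{k+1}, v) ∈ D ∩ D_R} is nonempty. -/
open Matrix

/-- recursive feasibility of the offline sampling SMPC scheme.  If the
robust control invariant polytope `C∞` is contained in the projection of `D ∩ D_R`
onto the state, then feasibility at time `k` implies feasibility at time `k+1` for
every realization of the system matrices in the polytope `co{(Aʲ, Bʲ)}`. -/
theorem smpc_recursive_feasibility
    (n m p T Nc : ℕ) (hT : 1 ≤ T)
    (A : Fin Nc → Matrix (Fin n) (Fin n) ℝ)
    (B : Fin Nc → Matrix (Fin n) (Fin m) ℝ)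
    (K : Matrix (Fin m) (Fin n) ℝ)
    (D : Set ((Fin n → ℝ) × (Fin T → Fin m → ℝ)))
    (Hinf : Matrix (Fin p) (Fin n) ℝ) (hinf : Fin p → ℝ)
    (Cinf : Set (Fin n → ℝ))
    (hCinf : Cinf = {x : Fin n → ℝ | Hinf.mulVec x ≤ hinf})
    (DR : Set ((Fin n → ℝ) × (Fin T → Fin m → ℝ)))
    (hDR : DR = {xv : (Fin n → ℝ) × (Fin T → Fin m → ℝ) |
      ∀ j : Fin Nc,
        Hinf.mulVec ((A j + B j * K).mulVec xv.1 + (B j).mulVec (xv.2 ⟨0, hT⟩)) ≤ hinf})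
    (hInv : Cinf ⊆ {x : Fin n → ℝ | ∃ v, (x, v) ∈ D ∩ DR}) :
    ∀ (xk : Fin n → ℝ) (vk : Fin T → Fin m → ℝ), (xk, vk) ∈ D ∩ DR →
      ∀ AB : Matrix (Fin n) (Fin n) ℝ × Matrix (Fin n) (Fin m) ℝ,
        AB ∈ convexHull ℝ (Set.range fun j => (A j, B j)) →
        {v : Fin T → Fin m → ℝ |
          ((AB.1 + AB.2 * K).mulVec xk + AB.2.mulVec (vk ⟨0, hT⟩), v) ∈ D ∩ DR}.Nonempty := by

  intro xk vk hk AB hAB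
  set v0 := vk ⟨0, hT⟩ with hv0
  -- the map AB ↦ Hinf ((A+BK) xk + B v0) is linear in AB
  let f : (Matrix (Fin n) (Fin n) ℝ × Matrix (Fin n) (Fin m) ℝ) →ₗ[ℝ] (Fin p → ℝ) :=
    { toFun := fun P => Hinf.mulVec ((P.1 + P.2 * K).mulVec xk + P.2.mulVec v0)
      map_add' := by
        intro P Q
        simp [Matrix.add_mulVec, Matrix.mulVec_add, Matrix.add_mul]
        abel
      map_smul' := by
        intro c P
        simp only [Prod.smul_fst, Prod.smul_snd, RingHom.id_apply, Matrix.smul_mul,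
          ← smul_add, Matrix.add_mulVec, Matrix.smul_mulVec, Matrix.mulVec_smul] }
  have hconv : Convex ℝ {P : Matrix (Fin n) (Fin n) ℝ × Matrix (Fin n) (Fin m) ℝ |
      f P ≤ hinf} := by
    have : Convex ℝ {y : Fin p → ℝ | y ≤ hinf} := by
      intro y hy z hz a b ha hb hab
      intro i
      have := hy i
      have := hz i
      calc a * y i + b * z i ≤ a * hinf i + b * hinf i := by
            apply add_le_add
            · exact mul_le_mul_of_nonneg_left (hy i) ha
            · exact mul_le_mul_of_nonneg_left (hz i) hb
        _ = hinf i := by rw [← add_mul, hab, one_mul]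
    exact this.linear_preimage f
  have hmem : AB ∈ {P : Matrix (Fin n) (Fin n) ℝ × Matrix (Fin n) (Fin m) ℝ |
      f P ≤ hinf} := by
    refine convexHull_min ?_ hconv hAB
    rintro _ ⟨j, rfl⟩
    exact (hDR ▸ hk.2) j
  have hx : ((AB.1 + AB.2 * K).mulVec xk + AB.2.mulVec v0) ∈ Cinf := by
    rw [hCinf]; exact hmem
  obtain ⟨v, hv⟩ := hInv hx
  exact ⟨v, hv⟩
end

section
/- Let μ be a probability measure on ℝ^{n_q}, and let A : ℝ^{n_q} → ℝ^{n×n} and B : ℝ^{n_q} → ℝ^{n×m} be bounded measurable matrix-valued maps. Let K ∈ ℝ^{m×n}, and let Q ∈ ℝ^{n×n}, R ∈ ℝ^{m×m}, P ∈ ℝ^{n×n} be symmetric with Q ≻ 0, R ≻ 0, and suppose Q + KᵀRK + E_{q∼μ}[(A(q) + B(q)K)ᵀ P (A(q) + B(q)K)] − P ⪯ 0 (Loewner order). For a horizon T ≥ 1, x ∈ ℝ^n and v = (v₀, …, v_{T−1}) ∈ (ℝ^m)^T, define the random trajectory over an i.i.d. sequence q₀, …, q_{T−1} ∼ μ by x₀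 = x, u_l = K x_l + v_l, x_{l+1} = A(q_l)x_l + B(q_l)u_l, and the expected finite-horizon cost J_T(x, v) = E[ Σ_{l=0}^{T−1}(x_lᵀ Q x_l + u_lᵀ R u_l) + x_Tᵀ P x_T ], the expectation taken with respect to the T-fold product measure μ^T. Define the shifted candidate ṽ = (v₁, …, v_{T−1}, 0) ∈ (ℝ^m)^T. Then E_{q∼μ}[ J_T( (A(q) + B(q)K)x + B(q)v₀ , ṽ ) ] ≤ J_T(x, v) − xᵀ Q x − (Kx + v₀)ᵀ R (Kx + v₀). -/
/-!
The shifted candidate started from `x₁ = A_cl(q₀) x + B(q₀) v₀` retraces the original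
trajectory one step later, so after integrating `q₀` as the first coordinate of a `(T+1)`-fold
product the left-hand side is the `(T+1)`-horizon path cost of `(x, v)` minus the first stage
cost. As `v_T = 0`, the `(T+1)`-horizon cost exceeds the `T`-horizon one by
`x_Tᵀ (A_cl(q_T)ᵀ P A_cl(q_T) - (P - Q - KᵀRK)) x_T`, and since `x_T` does not depend on the
last disturbance `q_T`, integrating `q_T` out first makes this nonpositive by the Lyapunov
condition. Bounded `A` and `B` make every integrand essentially bounded, which licenses Fubini.
-/

open MeasureTheory Matrix

/-- The prestabilized closed-loop trajectory: `x₀ = x`, `u_l = K x_l + v_l`,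
`x_{l+1} = A(q_l) x_l + B(q_l) u_l`. -/
noncomputable def smpcTraj {nq n m : ℕ}
    (A : (Fin nq → ℝ) → Matrix (Fin n) (Fin n) ℝ)
    (B : (Fin nq → ℝ) → Matrix (Fin n) (Fin m) ℝ)
    (K : Matrix (Fin m) (Fin n) ℝ)
    (x : Fin n → ℝ) (v : ℕ → Fin m → ℝ) (q : ℕ → Fin nq → ℝ) : ℕ → Fin n → ℝ
  | 0 => x
  | l + 1 =>
      (A (q l)).mulVec (smpcTraj A B K x v q l) +
        (B (q l)).mulVec (K.mulVec (smpcTraj A B K x v q l) + v l)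

/-- Extension of a `Fin T`-indexed family by zero. -/
def extendByZero {T : ℕ} {α : Type*} [Zero α] (f : Fin T → α) : ℕ → α :=
  fun l => if h : l < T then f ⟨l, h⟩ else 0

/-- The expected finite-horizon cost
`J_T(x,v) = E[ Σ_{l<T} (x_lᵀ Q x_l + u_lᵀ R u_l) + x_Tᵀ P x_T ]`, the expectation
taken w.r.t. the `T`-fold product measure `μ^T`. -/
noncomputable def smpcCost {nq n m : ℕ} (T : ℕ)
    (μ : Measure (Fin nq → ℝ))
    (A : (Fin nq → ℝ) → Matrix (Fin n) (Fin n) ℝ)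
    (B : (Fin nq → ℝ) → Matrix (Fin n) (Fin m) ℝ)
    (K : Matrix (Fin m) (Fin n) ℝ)
    (Q : Matrix (Fin n) (Fin n) ℝ) (R : Matrix (Fin m) (Fin m) ℝ)
    (P : Matrix (Fin n) (Fin n) ℝ)
    (x : Fin n → ℝ) (v : Fin T → Fin m → ℝ) : ℝ :=
  ∫ q : Fin T → (Fin nq → ℝ),
    ((∑ l ∈ Finset.range T,
        (smpcTraj A B K x (extendByZero v) (extendByZero q) l ⬝ᵥ
            Q.mulVec (smpcTraj A B K x (extendByZero v) (extendByZero q) l) +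
          (K.mulVec (smpcTraj A B K x (extendByZero v) (extendByZero q) l) +
              extendByZero v l) ⬝ᵥ
            R.mulVec
              (K.mulVec (smpcTraj A B K x (extendByZero v) (extendByZero q) l) +
                extendByZero v l))) +
      smpcTraj A B K x (extendByZero v) (extendByZero q) T ⬝ᵥ
        P.mulVec (smpcTraj A B K x (extendByZero v) (extendByZero q) T))
    ∂(Measure.pi fun _ : Fin T => μ)


open scoped ENNReal

theorem mulVec_dotProduct_mulVec_mulVec {ι κ R : Type*} [Fintype ι] [Fintype κ] [CommSemiring R]
    (N : Matrix ι κ R) (S : Matrix ι ι R) (y : κ → R) :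
    N *ᵥ y ⬝ᵥ S *ᵥ (N *ᵥ y) = y ⬝ᵥ (Nᵀ * S * N) *ᵥ y := by
  conv_rhs => rw [← mulVec_mulVec, ← mulVec_mulVec, dotProduct_mulVec, vecMul_transpose]

section MemLpTop
variable {Ω : Type*} [MeasurableSpace Ω] {ν : Measure Ω} {ι κ ρ : Type*}

theorem memLp_top_matrix_comp {α : Type*} [MeasurableSpace α] {A : α → Matrix ι κ ℝ}
    (hAm : ∀ i j, Measurable fun a => A a i j) (hAb : ∃ C, ∀ a i j, |A a i j| ≤ C)
    {g : Ω → α} (hg : Measurable g) (i : ι) (j : κ) : MemLp (fun ω => A (g ω) i j) ∞ ν := by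
  obtain ⟨C, hC⟩ := hAb
  exact memLp_top_of_bound ((hAm i j).comp hg).aestronglyMeasurable C
    (ae_of_all _ fun ω => hC (g ω) i j)

variable [Fintype κ]

theorem memLp_top_dotProduct {f g : Ω → κ → ℝ} (hf : ∀ j, MemLp (fun ω => f ω j) ∞ ν)
    (hg : ∀ j, MemLp (fun ω => g ω j) ∞ ν) : MemLp (fun ω => f ω ⬝ᵥ g ω) ∞ ν :=
  memLp_finsetSum _ fun j _ => (hg j).mul' (hf j)

theorem memLp_top_mulVec_apply {M : Ω → Matrix ι κ ℝ} {f : Ω → κ → ℝ}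
    (hM : ∀ i j, MemLp (fun ω => M ω i j) ∞ ν) (hf : ∀ j, MemLp (fun ω => f ω j) ∞ ν) (i : ι) :
    MemLp (fun ω => (M ω *ᵥ f ω) i) ∞ ν :=
  memLp_top_dotProduct (hM i) hf

theorem memLp_top_mul_apply {M : Ω → Matrix ι κ ℝ} {N : Ω → Matrix κ ρ ℝ}
    (hM : ∀ i j, MemLp (fun ω => M ω i j) ∞ ν) (hN : ∀ j k, MemLp (fun ω => N ω j k) ∞ ν)
    (i : ι) (k : ρ) : MemLp (fun ω => (M ω * N ω) i k) ∞ ν :=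
  memLp_top_dotProduct (hM i) fun j => hN j k

theorem memLp_top_const_mulVec_apply (S : Matrix ι κ ℝ) {f : Ω → κ → ℝ}
    (hf : ∀ j, MemLp (fun ω => f ω j) ∞ ν) (i : ι) : MemLp (fun ω => (S *ᵥ f ω) i) ∞ ν :=
  memLp_top_mulVec_apply (fun i j => memLp_top_const (S i j)) hf i

theorem memLp_top_dotProduct_mulVec [Fintype ι] (S : Matrix ι κ ℝ) {f : Ω → ι → ℝ}
    {g : Ω → κ → ℝ} (hf : ∀ i, MemLp (fun ω => f ω i) ∞ ν) (hg : ∀ j, MemLp (fun ω => g ω j) ∞ ν) :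
    MemLp (fun ω => f ω ⬝ᵥ S *ᵥ g ω) ∞ ν :=
  memLp_top_dotProduct hf (memLp_top_const_mulVec_apply S hg)

theorem memLp_top_transpose_mul_mul_apply {N : Ω → Matrix κ ι ℝ}
    (hN : ∀ i j, MemLp (fun ω => N ω i j) ∞ ν) (S : Matrix κ κ ℝ) (k l : ι) :
    MemLp (fun ω => ((N ω)ᵀ * S * N ω) k l) ∞ ν :=
  memLp_top_mul_apply
    (memLp_top_mul_apply (fun i j => hN j i) fun i j => memLp_top_const (S i j)) hN k l

end MemLpTop

section Integral
variable {Ω ι : Type*} [MeasurableSpace Ω] {μ : Measure Ω} [Fintype ι] {M : Ω → Matrix ι ι ℝ}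

theorem integral_dotProduct_mulVec (hM : ∀ i j, Integrable (fun ω => M ω i j) μ) (y z : ι → ℝ) :
    ∫ ω, y ⬝ᵥ M ω *ᵥ z ∂μ = y ⬝ᵥ (Matrix.of fun i j => ∫ ω, M ω i j ∂μ) *ᵥ z := by
  have hrow : ∀ i, Integrable (fun ω => ∑ j, M ω i j * z j) μ :=
    fun i => integrable_finsetSum _ fun j _ => (hM i j).mul_const _
  simp only [dotProduct, mulVec, of_apply]
  rw [integral_finsetSum _ fun i _ => (hrow i).const_mul _]
  refine Finset.sum_congr rfl fun i _ => ?_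
  rw [integral_const_mul, integral_finsetSum _ fun j _ => (hM i j).mul_const _]
  simp only [integral_mul_const]

theorem integral_dotProduct_mulVec_le (hM : ∀ i j, Integrable (fun ω => M ω i j) μ)
    {S : Matrix ι ι ℝ} (hS : (S - Matrix.of fun i j => ∫ ω, M ω i j ∂μ).PosSemidef) (y : ι → ℝ) :
    ∫ ω, y ⬝ᵥ M ω *ᵥ y ∂μ ≤ y ⬝ᵥ S *ᵥ y := by
  have h := hS.dotProduct_mulVec_nonneg y
  rw [star_trivial, sub_mulVec, dotProduct_sub, sub_nonneg] at h
  rwa [integral_dotProduct_mulVec hM]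

end Integral

section Fubini
variable {β E : Type*} [MeasurableSpace β] [NormedAddCommGroup E] {N : ℕ}
  (μ : Fin (N + 1) → Measure β) [∀ i, SigmaFinite (μ i)]

theorem integrable_prod_insertNth (i : Fin (N + 1)) {g : (Fin (N + 1) → β) → E}
    (hg : Integrable g (Measure.pi μ)) :
    Integrable (fun p => g (i.insertNth p.1 p.2))
      ((μ i).prod (Measure.pi fun j => μ (i.succAbove j))) :=
  ((measurePreserving_piFinSuccAbove μ i).symm).integrable_comp_emb
    (MeasurableEquiv.measurableEmbedding _) |>.mpr hg

variable [NormedSpace ℝ E]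

theorem integral_pi_eq_integral_prod_insertNth (i : Fin (N + 1)) (g : (Fin (N + 1) → β) → E) :
    ∫ ω, g ω ∂Measure.pi μ =
      ∫ p, g (i.insertNth p.1 p.2) ∂(μ i).prod (Measure.pi fun j => μ (i.succAbove j)) :=
  ((measurePreserving_piFinSuccAbove μ i).symm).integral_comp' g |>.symm

theorem integral_pi_fin_succ_cons {g : (Fin (N + 1) → β) → E}
    (hg : Integrable g (Measure.pi μ)) :
    ∫ ω, g ω ∂Measure.pi μ =
      ∫ a, ∫ f, g (Fin.cons a f) ∂Measure.pi (fun j => μ j.succ) ∂μ 0 := by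
  rw [integral_pi_eq_integral_prod_insertNth μ 0,
    integral_prod _ (integrable_prod_insertNth μ 0 hg)]
  simp only [Fin.insertNth_zero', Fin.succAbove_zero]

theorem integral_pi_fin_succ_snoc {g : (Fin (N + 1) → β) → E}
    (hg : Integrable g (Measure.pi μ)) :
    ∫ ω, g ω ∂Measure.pi μ =
      ∫ f, ∫ a, g (Fin.snoc f a) ∂μ (Fin.last N) ∂Measure.pi (fun j => μ j.castSucc) := by
  rw [integral_pi_eq_integral_prod_insertNth μ (Fin.last N),
    integral_prod_symm _ (integrable_prod_insertNth μ _ hg)]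
  simp only [Fin.insertNth_last', Fin.succAbove_last]

end Fubini

section ExtendByZero
variable {T : ℕ} {α : Type*} [Zero α]

def shiftLeft (f : Fin T → α) : Fin T → α :=
  fun l => if h : (l : ℕ) + 1 < T then f ⟨l + 1, h⟩ else 0

theorem extendByZero_of_lt (f : Fin T → α) {l : ℕ} (h : l < T) : extendByZero f l = f ⟨l, h⟩ :=
  dif_pos h

theorem extendByZero_of_le (f : Fin T → α) {l : ℕ} (h : T ≤ l) : extendByZero f l = 0 :=
  dif_neg h.not_gt

theorem extendByZero_shiftLeft (f : Fin T → α) (l : ℕ) :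
    extendByZero (shiftLeft f) l = extendByZero f (l + 1) := by
  by_cases hl : l + 1 < T
  · rw [extendByZero_of_lt _ (by omega), extendByZero_of_lt _ hl, shiftLeft, dif_pos hl]
  · rw [extendByZero_of_le f (by omega)]
    by_cases hl' : l < T
    · rw [extendByZero_of_lt _ hl', shiftLeft, dif_neg hl]
    · rw [extendByZero_of_le _ (by omega)]

theorem extendByZero_cons_zero (a : α) (f : Fin T → α) :
    extendByZero (Fin.cons a f : Fin (T + 1) → α) 0 = a :=
  extendByZero_of_lt _ T.succ_pos

theorem extendByZero_cons_succ (a : α) (f : Fin T → α) (l : ℕ) :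
    extendByZero (Fin.cons a f : Fin (T + 1) → α) (l + 1) = extendByZero f l := by
  by_cases hl : l < T
  · rw [extendByZero_of_lt _ (by omega), extendByZero_of_lt _ hl]
    exact Fin.cons_succ (α := fun _ => α) a f ⟨l, hl⟩
  · rw [extendByZero_of_le _ (by omega), extendByZero_of_le _ (by omega)]

theorem extendByZero_snoc_of_lt (f : Fin T → α) (a : α) {l : ℕ} (hl : l < T) :
    extendByZero (Fin.snoc f a : Fin (T + 1) → α) l = extendByZero f l := by
  rw [extendByZero_of_lt _ (by omega), extendByZero_of_lt _ hl]
  exact Fin.snoc_castSucc (α := fun _ => α) a f ⟨l, hl⟩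

theorem extendByZero_snoc_self (f : Fin T → α) (a : α) :
    extendByZero (Fin.snoc f a : Fin (T + 1) → α) T = a := by
  rw [extendByZero_of_lt _ T.lt_succ_self]
  exact Fin.snoc_last (α := fun _ => α) a f

theorem measurable_extendByZero_apply [MeasurableSpace α] (l : ℕ) :
    Measurable fun f : Fin T → α => extendByZero f l := by
  by_cases hl : l < T
  · simpa only [extendByZero_of_lt _ hl] using measurable_pi_apply _
  · simpa only [extendByZero_of_le _ (not_lt.1 hl)] using measurable_const

end ExtendByZero

section Trajectory
variable {nq n m : ℕ} (A : (Fin nq → ℝ) → Matrix (Fin n) (Fin n) ℝ)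
  (B : (Fin nq → ℝ) → Matrix (Fin n) (Fin m) ℝ) (K : Matrix (Fin m) (Fin n) ℝ)

theorem smpcTraj_succ (x : Fin n → ℝ) (v : ℕ → Fin m → ℝ) (qs : ℕ → Fin nq → ℝ) (l : ℕ) :
    smpcTraj A B K x v qs (l + 1) =
      (A (qs l) + B (qs l) * K) *ᵥ smpcTraj A B K x v qs l + B (qs l) *ᵥ v l := by
  rw [smpcTraj, add_mulVec, mulVec_add, ← mulVec_mulVec, add_assoc]

theorem smpcTraj_tail (x : Fin n → ℝ) (v : ℕ → Fin m → ℝ) (qs : ℕ → Fin nq → ℝ) :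
    ∀ l, smpcTraj A B K (smpcTraj A B K x v qs 1) (fun l => v (l + 1)) (fun l => qs (l + 1)) l =
      smpcTraj A B K x v qs (l + 1)
  | 0 => rfl
  | l + 1 => by rw [smpcTraj, smpcTraj_tail x v qs l]; rfl

theorem smpcTraj_congr (x : Fin n → ℝ) (v : ℕ → Fin m → ℝ) {qs qs' : ℕ → Fin nq → ℝ} :
    ∀ l, (∀ k < l, qs k = qs' k) → smpcTraj A B K x v qs l = smpcTraj A B K x v qs' l
  | 0, _ => rfl
  | l + 1, h => by
    rw [smpcTraj, smpcTraj, smpcTraj_congr x v l fun k hk => h k (by omega), h l l.lt_succ_self]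

end Trajectory

section Cost
variable {nq n m : ℕ} (A : (Fin nq → ℝ) → Matrix (Fin n) (Fin n) ℝ)
  (B : (Fin nq → ℝ) → Matrix (Fin n) (Fin m) ℝ) (K : Matrix (Fin m) (Fin n) ℝ)
  (Q : Matrix (Fin n) (Fin n) ℝ) (R : Matrix (Fin m) (Fin m) ℝ) (P : Matrix (Fin n) (Fin n) ℝ)

noncomputable def smpcStageCost (x : Fin n → ℝ) (v : ℕ → Fin m → ℝ) (qs : ℕ → Fin nq → ℝ)
    (l : ℕ) : ℝ :=
  smpcTraj A B K x v qs l ⬝ᵥ Q *ᵥ smpcTraj A B K x v qs l +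
    (K *ᵥ smpcTraj A B K x v qs l + v l) ⬝ᵥ R *ᵥ (K *ᵥ smpcTraj A B K x v qs l + v l)

noncomputable def smpcTerminalCost (x : Fin n → ℝ) (v : ℕ → Fin m → ℝ) (qs : ℕ → Fin nq → ℝ)
    (l : ℕ) : ℝ :=
  smpcTraj A B K x v qs l ⬝ᵥ P *ᵥ smpcTraj A B K x v qs l

noncomputable def smpcPathCost (T : ℕ) (x : Fin n → ℝ) (v : ℕ → Fin m → ℝ)
    (qs : ℕ → Fin nq → ℝ) : ℝ :=
  ∑ l ∈ Finset.range T, smpcStageCost A B K Q R x v qs l + smpcTerminalCost A B K P x v qs T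

theorem smpcCost_eq_integral_smpcPathCost {T : ℕ} (μ : Measure (Fin nq → ℝ)) (x : Fin n → ℝ)
    (v : Fin T → Fin m → ℝ) :
    smpcCost T μ A B K Q R P x v = ∫ ω, smpcPathCost A B K Q R P T x (extendByZero v)
      (extendByZero ω) ∂Measure.pi fun _ : Fin T => μ :=
  rfl

theorem smpcPathCost_congr (T : ℕ) (x : Fin n → ℝ) (v : ℕ → Fin m → ℝ)
    {qs qs' : ℕ → Fin nq → ℝ} (h : ∀ k < T, qs k = qs' k) :
    smpcPathCost A B K Q R P T x v qs = smpcPathCost A B K Q R P T x v qs' := by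
  have htraj : ∀ l ≤ T, smpcTraj A B K x v qs l = smpcTraj A B K x v qs' l :=
    fun l hl => smpcTraj_congr A B K x v l fun k hk => h k (by omega)
  refine congrArg₂ (· + ·) (Finset.sum_congr rfl fun l hl => ?_) ?_
  · simp only [smpcStageCost, htraj l (Finset.mem_range.1 hl).le]
  · simp only [smpcTerminalCost, htraj T le_rfl]

theorem smpcPathCost_tail (T : ℕ) (x : Fin n → ℝ) (v : ℕ → Fin m → ℝ) (qs : ℕ → Fin nq → ℝ) :
    smpcPathCost A B K Q R P T (smpcTraj A B K x v qs 1) (fun l => v (l + 1))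
        (fun l => qs (l + 1)) + smpcStageCost A B K Q R x v qs 0 =
      smpcPathCost A B K Q R P (T + 1) x v qs := by
  simp only [smpcPathCost, smpcStageCost, smpcTerminalCost, smpcTraj_tail,
    Finset.sum_range_succ' _ T]
  ring

theorem smpcPathCost_succ_sub (T : ℕ) (x : Fin n → ℝ) {v : ℕ → Fin m → ℝ} (hv : v T = 0)
    (qs : ℕ → Fin nq → ℝ) :
    smpcPathCost A B K Q R P (T + 1) x v qs - smpcPathCost A B K Q R P T x v qs =
      smpcTraj A B K x v qs T ⬝ᵥ ((A (qs T) + B (qs T) * K)ᵀ * P * (A (qs T) + B (qs T) * K)) *ᵥ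
          smpcTraj A B K x v qs T -
        smpcTraj A B K x v qs T ⬝ᵥ (P - (Q + Kᵀ * R * K)) *ᵥ smpcTraj A B K x v qs T := by
  simp only [smpcPathCost, smpcStageCost, smpcTerminalCost, Finset.sum_range_succ,
    smpcTraj_succ A B K x v qs T, hv, mulVec_zero, add_zero, mulVec_dotProduct_mulVec_mulVec]
  rw [sub_mulVec, add_mulVec, dotProduct_sub, dotProduct_add]
  ring

theorem smpcPathCost_shiftLeft {T : ℕ} (hT : 1 ≤ T) (x : Fin n → ℝ) (v : Fin T → Fin m → ℝ)
    (q : Fin nq → ℝ) (q' : Fin T → Fin nq → ℝ) :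
    smpcPathCost A B K Q R P T ((A q + B q * K) *ᵥ x + B q *ᵥ v ⟨0, hT⟩)
        (extendByZero (shiftLeft v)) (extendByZero q') =
      smpcPathCost A B K Q R P (T + 1) x (extendByZero v)
          (extendByZero (Fin.cons q q' : Fin (T + 1) → Fin nq → ℝ)) -
        (x ⬝ᵥ Q *ᵥ x + (K *ᵥ x + v ⟨0, hT⟩) ⬝ᵥ R *ᵥ (K *ᵥ x + v ⟨0, hT⟩)) := by
  set qs := extendByZero (Fin.cons q q' : Fin (T + 1) → Fin nq → ℝ)
  have hq0 : qs 0 = q := extendByZero_cons_zero q q'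
  have hv0 : extendByZero v 0 = v ⟨0, hT⟩ := extendByZero_of_lt v hT
  have hx : (A q + B q * K) *ᵥ x + B q *ᵥ v ⟨0, hT⟩ =
      smpcTraj A B K x (extendByZero v) qs 1 := by
    rw [smpcTraj_succ A B K x _ qs 0, hq0, hv0]
    rfl
  have hv : extendByZero (shiftLeft v) = fun l => extendByZero v (l + 1) :=
    funext (extendByZero_shiftLeft v)
  have hq : extendByZero q' = fun l => qs (l + 1) :=
    funext fun l => (extendByZero_cons_succ q q' l).symm
  have hstage : smpcStageCost A B K Q R x (extendByZero v) qs 0 =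
      x ⬝ᵥ Q *ᵥ x + (K *ᵥ x + v ⟨0, hT⟩) ⬝ᵥ R *ᵥ (K *ᵥ x + v ⟨0, hT⟩) := by
    rw [smpcStageCost, hv0]
    rfl
  rw [hx, hv, hq, ← smpcPathCost_tail, hstage, add_sub_cancel_right]

end Cost

section Expectation
variable {nq n m : ℕ} {A : (Fin nq → ℝ) → Matrix (Fin n) (Fin n) ℝ}
  {B : (Fin nq → ℝ) → Matrix (Fin n) (Fin m) ℝ} (K : Matrix (Fin m) (Fin n) ℝ)
  (Q : Matrix (Fin n) (Fin n) ℝ) (R : Matrix (Fin m) (Fin m) ℝ) (P : Matrix (Fin n) (Fin n) ℝ)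

theorem memLp_top_smpcTraj {Ω : Type*} [MeasurableSpace Ω] {ν : Measure Ω}
    (hAmeas : ∀ i j, Measurable fun q => A q i j) (hBmeas : ∀ i j, Measurable fun q => B q i j)
    (hAbdd : ∃ C : ℝ, ∀ q i j, |A q i j| ≤ C) (hBbdd : ∃ C : ℝ, ∀ q i j, |B q i j| ≤ C)
    {qs : Ω → ℕ → Fin nq → ℝ} (hqs : ∀ l, Measurable fun ω => qs ω l)
    (x : Fin n → ℝ) (v : ℕ → Fin m → ℝ) :
    ∀ l i, MemLp (fun ω => smpcTraj A B K x v (qs ω) l i) ∞ ν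
  | 0, _ => memLp_top_const _
  | l + 1, i => by
    have hx := memLp_top_smpcTraj (ν := ν) hAmeas hBmeas hAbdd hBbdd hqs x v l
    have hu : ∀ j, MemLp (fun ω => (K *ᵥ smpcTraj A B K x v (qs ω) l + v l) j) ∞ ν :=
      fun j => (memLp_top_const_mulVec_apply K hx j).add (memLp_top_const _)
    simp only [smpcTraj, Pi.add_apply]
    exact (memLp_top_mulVec_apply (memLp_top_matrix_comp hAmeas hAbdd (hqs l)) hx i).add
      (memLp_top_mulVec_apply (memLp_top_matrix_comp hBmeas hBbdd (hqs l)) hu i)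

theorem integrable_smpcPathCost {Ω : Type*} [MeasurableSpace Ω] {ν : Measure Ω}
    [IsFiniteMeasure ν]
    (hAmeas : ∀ i j, Measurable fun q => A q i j) (hBmeas : ∀ i j, Measurable fun q => B q i j)
    (hAbdd : ∃ C : ℝ, ∀ q i j, |A q i j| ≤ C) (hBbdd : ∃ C : ℝ, ∀ q i j, |B q i j| ≤ C)
    {qs : Ω → ℕ → Fin nq → ℝ} (hqs : ∀ l, Measurable fun ω => qs ω l)
    (T : ℕ) (x : Fin n → ℝ) (v : ℕ → Fin m → ℝ) :
    Integrable (fun ω => smpcPathCost A B K Q R P T x v (qs ω)) ν := by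
  have hx := memLp_top_smpcTraj K (ν := ν) hAmeas hBmeas hAbdd hBbdd hqs x v
  have hu : ∀ l j, MemLp (fun ω => (K *ᵥ smpcTraj A B K x v (qs ω) l + v l) j) ∞ ν :=
    fun l j => (memLp_top_const_mulVec_apply K (hx l) j).add (memLp_top_const _)
  refine MemLp.integrable le_top ((memLp_finsetSum _ fun l _ => ?_).add ?_)
  · exact (memLp_top_dotProduct_mulVec Q (hx l) (hx l)).add
      (memLp_top_dotProduct_mulVec R (hu l) (hu l))
  · exact memLp_top_dotProduct_mulVec P (hx T) (hx T)

variable (μ : Measure (Fin nq → ℝ)) [IsProbabilityMeasure μ]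

theorem smpcCost_eq_integral_pi_succ
    (hAmeas : ∀ i j, Measurable fun q => A q i j) (hBmeas : ∀ i j, Measurable fun q => B q i j)
    (hAbdd : ∃ C : ℝ, ∀ q i j, |A q i j| ≤ C) (hBbdd : ∃ C : ℝ, ∀ q i j, |B q i j| ≤ C)
    {T : ℕ} (x : Fin n → ℝ) (v : Fin T → Fin m → ℝ) :
    smpcCost T μ A B K Q R P x v = ∫ ω, smpcPathCost A B K Q R P T x (extendByZero v)
      (extendByZero ω) ∂Measure.pi fun _ : Fin (T + 1) => μ := by
  rw [smpcCost_eq_integral_smpcPathCost, integral_pi_fin_succ_snoc _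
    (integrable_smpcPathCost K Q R P hAmeas hBmeas hAbdd hBbdd measurable_extendByZero_apply
      T x _)]
  refine integral_congr_ae (ae_of_all _ fun q' => ?_)
  have hlast : ∀ q, smpcPathCost A B K Q R P T x (extendByZero v)
      (extendByZero (Fin.snoc q' q : Fin (T + 1) → Fin nq → ℝ)) =
        smpcPathCost A B K Q R P T x (extendByZero v) (extendByZero q') :=
    fun q => smpcPathCost_congr A B K Q R P T x _ fun k hk => extendByZero_snoc_of_lt q' q hk
  simp only [hlast, integral_const, probReal_univ, one_smul]

theorem integral_smpcCost_shiftLeft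
    (hAmeas : ∀ i j, Measurable fun q => A q i j) (hBmeas : ∀ i j, Measurable fun q => B q i j)
    (hAbdd : ∃ C : ℝ, ∀ q i j, |A q i j| ≤ C) (hBbdd : ∃ C : ℝ, ∀ q i j, |B q i j| ≤ C)
    {T : ℕ} (hT : 1 ≤ T) (x : Fin n → ℝ) (v : Fin T → Fin m → ℝ) :
    ∫ q, smpcCost T μ A B K Q R P ((A q + B q * K) *ᵥ x + B q *ᵥ v ⟨0, hT⟩) (shiftLeft v) ∂μ =
      ∫ ω, smpcPathCost A B K Q R P (T + 1) x (extendByZero v) (extendByZero ω)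
          ∂(Measure.pi fun _ : Fin (T + 1) => μ) -
        (x ⬝ᵥ Q *ᵥ x + (K *ᵥ x + v ⟨0, hT⟩) ⬝ᵥ R *ᵥ (K *ᵥ x + v ⟨0, hT⟩)) := by
  have hint := integrable_smpcPathCost K Q R P (ν := Measure.pi fun _ : Fin (T + 1) => μ)
    hAmeas hBmeas hAbdd hBbdd measurable_extendByZero_apply (T + 1) x (extendByZero v)
  have hsub := integral_sub hint
    (integrable_const (x ⬝ᵥ Q *ᵥ x + (K *ᵥ x + v ⟨0, hT⟩) ⬝ᵥ R *ᵥ (K *ᵥ x + v ⟨0, hT⟩)))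
  rw [integral_const, probReal_univ, one_smul] at hsub
  rw [← hsub]
  refine Eq.trans ?_ (integral_pi_fin_succ_cons _ (hint.sub (integrable_const _))).symm
  exact integral_congr_ae (ae_of_all _ fun q => integral_congr_ae (ae_of_all _ fun q' =>
    smpcPathCost_shiftLeft A B K Q R P hT x v q q'))

theorem integral_smpcPathCost_succ_le
    (hAmeas : ∀ i j, Measurable fun q => A q i j) (hBmeas : ∀ i j, Measurable fun q => B q i j)
    (hAbdd : ∃ C : ℝ, ∀ q i j, |A q i j| ≤ C) (hBbdd : ∃ C : ℝ, ∀ q i j, |B q i j| ≤ C)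
    (hLyap : (P - (Q + Kᵀ * R * K +
        Matrix.of fun i j =>
          ∫ q, ((A q + B q * K)ᵀ * P * (A q + B q * K)) i j ∂μ)).PosSemidef)
    {T : ℕ} (x : Fin n → ℝ) (v : Fin T → Fin m → ℝ) :
    ∫ ω, smpcPathCost A B K Q R P (T + 1) x (extendByZero v) (extendByZero ω)
        ∂(Measure.pi fun _ : Fin (T + 1) => μ) ≤
      ∫ ω, smpcPathCost A B K Q R P T x (extendByZero v) (extendByZero ω)
        ∂(Measure.pi fun _ : Fin (T + 1) => μ) := by
  have hint := fun N => integrable_smpcPathCost K Q R P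
    (ν := Measure.pi fun _ : Fin (T + 1) => μ) hAmeas hBmeas hAbdd hBbdd
    measurable_extendByZero_apply N x (extendByZero v)
  have hAcl : ∀ i j, MemLp (fun q => (A q + B q * K) i j) ∞ μ := fun i j =>
    (memLp_top_matrix_comp hAmeas hAbdd measurable_id i j).add
      (memLp_top_mul_apply (memLp_top_matrix_comp hBmeas hBbdd measurable_id)
        (fun i j => memLp_top_const (K i j)) i j)
  have hM := memLp_top_transpose_mul_mul_apply hAcl P
  rw [← sub_nonpos, ← integral_sub (hint _) (hint _)]
  refine (integral_pi_fin_succ_snoc _ ((hint _).sub (hint _))).trans_le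
    (integral_nonpos fun q' => ?_)
  set y := smpcTraj A B K x (extendByZero v) (extendByZero q') T
  have hstep : ∀ q,
      smpcPathCost A B K Q R P (T + 1) x (extendByZero v)
          (extendByZero (Fin.snoc q' q : Fin (T + 1) → Fin nq → ℝ)) -
        smpcPathCost A B K Q R P T x (extendByZero v)
          (extendByZero (Fin.snoc q' q : Fin (T + 1) → Fin nq → ℝ)) =
      y ⬝ᵥ ((A q + B q * K)ᵀ * P * (A q + B q * K)) *ᵥ y - y ⬝ᵥ (P - (Q + Kᵀ * R * K)) *ᵥ y := by
    intro q
    rw [smpcPathCost_succ_sub A B K Q R P T x (extendByZero_of_le v le_rfl),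
      extendByZero_snoc_self,
      smpcTraj_congr A B K x _ T fun k hk => extendByZero_snoc_of_lt q' q hk]
  have hquad : Integrable (fun q => y ⬝ᵥ ((A q + B q * K)ᵀ * P * (A q + B q * K)) *ᵥ y) μ :=
    (memLp_top_dotProduct (fun i => memLp_top_const (y i))
      (memLp_top_mulVec_apply hM fun i => memLp_top_const (y i))).integrable le_top
  simp only [Pi.sub_apply, Pi.zero_apply, hstep]
  rw [integral_sub hquad (integrable_const _), integral_const, probReal_univ, one_smul, sub_nonpos]
  exact integral_dotProduct_mulVec_le (fun i j => (hM i j).integrable le_top)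
    (sub_add_eq_sub_sub P _ _ ▸ hLyap) y

end Expectation

theorem smpc_expected_cost_decrease_general
    {nq n m : ℕ} (T : ℕ) (hT : 1 ≤ T)
    (μ : Measure (Fin nq → ℝ)) [IsProbabilityMeasure μ]
    (A : (Fin nq → ℝ) → Matrix (Fin n) (Fin n) ℝ)
    (B : (Fin nq → ℝ) → Matrix (Fin n) (Fin m) ℝ)
    (hAmeas : ∀ i j, Measurable fun q => A q i j)
    (hBmeas : ∀ i j, Measurable fun q => B q i j)
    (hAbdd : ∃ C : ℝ, ∀ q i j, |A q i j| ≤ C)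
    (hBbdd : ∃ C : ℝ, ∀ q i j, |B q i j| ≤ C)
    (K : Matrix (Fin m) (Fin n) ℝ)
    (Q P : Matrix (Fin n) (Fin n) ℝ) (R : Matrix (Fin m) (Fin m) ℝ)
    (hLyap : (P - (Q + Kᵀ * R * K +
        Matrix.of fun i j =>
          ∫ q, ((A q + B q * K)ᵀ * P * (A q + B q * K)) i j ∂μ)).PosSemidef)
    (x : Fin n → ℝ) (v : Fin T → Fin m → ℝ) :
    ∫ q, smpcCost T μ A B K Q R P
        ((A q + B q * K).mulVec x + (B q).mulVec (v ⟨0, hT⟩))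
        (fun l : Fin T => if h : (l : ℕ) + 1 < T then v ⟨(l : ℕ) + 1, h⟩ else 0) ∂μ ≤
      smpcCost T μ A B K Q R P x v - x ⬝ᵥ Q.mulVec x -
        (K.mulVec x + v ⟨0, hT⟩) ⬝ᵥ R.mulVec (K.mulVec x + v ⟨0, hT⟩) := by
  refine (integral_smpcCost_shiftLeft K Q R P μ hAmeas hBmeas hAbdd hBbdd hT x v).trans_le ?_
  rw [smpcCost_eq_integral_pi_succ K Q R P μ hAmeas hBmeas hAbdd hBbdd x v, sub_sub]
  exact sub_le_sub_right
    (integral_smpcPathCost_succ_le K Q R P μ hAmeas hBmeas hAbdd hBbdd hLyap x v) _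

/-- expected cost decrease along the shifted candidate solution, under
the stochastic Lyapunov condition `Q + KᵀRK + E[A_cl(q)ᵀ P A_cl(q)] − P ⪯ 0`. -/
theorem smpc_expected_cost_decrease
    {nq n m : ℕ} (T : ℕ) (hT : 1 ≤ T)
    (μ : Measure (Fin nq → ℝ)) [IsProbabilityMeasure μ]
    (A : (Fin nq → ℝ) → Matrix (Fin n) (Fin n) ℝ)
    (B : (Fin nq → ℝ) → Matrix (Fin n) (Fin m) ℝ)
    (hAmeas : ∀ i j, Measurable fun q => A q i j)
    (hBmeas : ∀ i j, Measurable fun q => B q i j)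
    (hAbdd : ∃ C : ℝ, ∀ q i j, |A q i j| ≤ C)
    (hBbdd : ∃ C : ℝ, ∀ q i j, |B q i j| ≤ C)
    (K : Matrix (Fin m) (Fin n) ℝ)
    (Q P : Matrix (Fin n) (Fin n) ℝ) (R : Matrix (Fin m) (Fin m) ℝ)
    (hQ : Q.PosDef) (hR : R.PosDef) (hPsymm : P.IsSymm)
    (hLyap : (P - (Q + Kᵀ * R * K +
        Matrix.of fun i j =>
          ∫ q, ((A q + B q * K)ᵀ * P * (A q + B q * K)) i j ∂μ)).PosSemidef)
    (x : Fin n → ℝ) (v : Fin T → Fin m → ℝ) :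
    ∫ q, smpcCost T μ A B K Q R P
        ((A q + B q * K).mulVec x + (B q).mulVec (v ⟨0, hT⟩))
        (fun l : Fin T => if h : (l : ℕ) + 1 < T then v ⟨(l : ℕ) + 1, h⟩ else 0) ∂μ ≤
      smpcCost T μ A B K Q R P x v - x ⬝ᵥ Q.mulVec x -
        (K.mulVec x + v ⟨0, hT⟩) ⬝ᵥ R.mulVec (K.mulVec x + v ⟨0, hT⟩) :=
  smpc_expected_cost_decrease_general T hT μ A B hAmeas hBmeas hAbdd hBbdd K Q P R hLyap x v
end
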